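/- arXiv:1610.07447 — 6 statements merged into one kernel-verified Lean document; each statement's English description precedes it below -/
import Mathlib

section
/- Let M be a conical refinement monoid and define x ⊥ y to mean there is no nonzero z with z ≤⁺ x and z ≤⁺ y, where z ≤⁺ x means x = z + t for some t. If x ⊥ z and y ⊥ z then (x + y) ⊥ z. -/
/-- The algebraic preorder on a commutative monoid: `x ≤⁺ y` iff `∃ z, x + z = y`. -/
def AlgLE {M : Type*} [AddCommMonoid M] (x y : M) : Prop := ∃ z : M, x + z = y

/-- A commutative monoid is conical if `x + y = 0` forces `x = y = 0`. -/
def Conical (M : Type*) [AddCommMonoid M] : Prop :=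
  ∀ x y : M, x + y = 0 → x = 0 ∧ y = 0

/-- The 2×2 refinement property. -/
def IsRefinementMonoid (M : Type*) [AddCommMonoid M] : Prop :=
  ∀ a₀ a₁ b₀ b₁ : M, a₀ + a₁ = b₀ + b₁ →
    ∃ c₀₀ c₀₁ c₁₀ c₁₁ : M,
      a₀ = c₀₀ + c₀₁ ∧ a₁ = c₁₀ + c₁₁ ∧ b₀ = c₀₀ + c₁₀ ∧ b₁ = c₀₁ + c₁₁

/-- Orthogonality: there is no nonzero common lower bound for `≤⁺`. -/
def Orth {M : Type*} [AddCommMonoid M] (x y : M) : Prop :=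
  ¬ ∃ z : M, z ≠ 0 ∧ AlgLE z x ∧ AlgLE z y

/-- `e` has finite index: some `n` with `(n+1)x ≤⁺ e → x = 0`. -/
def HasFiniteIndex {M : Type*} [AddCommMonoid M] (e : M) : Prop :=
  ∃ n : ℕ, ∀ x : M, AlgLE ((n + 1) • x) e → x = 0

/-- `M` is prime: the nonzero elements are downward directed under `≤⁺`. -/
def PrimeMonoid (M : Type*) [AddCommMonoid M] : Prop :=
  ∀ x y : M, x ≠ 0 → y ≠ 0 → ∃ z : M, z ≠ 0 ∧ AlgLE z x ∧ AlgLE z y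

/-- An atom: a nonzero `p` such that every nonzero `x ≤⁺ p` satisfies `p ≤⁺ x`. -/
def MonAtom {M : Type*} [AddCommMonoid M] (p : M) : Prop :=
  p ≠ 0 ∧ ∀ x : M, x ≠ 0 → AlgLE x p → AlgLE p x

theorem stmt2 {M : Type*} [AddCommMonoid M]
    (hCon : Conical M) (hRef : IsRefinementMonoid M)
    (x y z : M) (hxz : Orth x z) (hyz : Orth y z) :
    Orth (x + y) z := by
  rintro ⟨w, hw0, ⟨t, hwt⟩, ⟨s, hws⟩⟩
  obtain ⟨c₀₀, c₀₁, c₁₀, c₁₁, hw, ht, hx, hy⟩ := hRef w t x y hwt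
  rcases eq_or_ne c₀₀ 0 with h0 | h0
  · apply hyz
    refine ⟨c₀₁, fun h => hw0 (by rw [hw, h0, h, add_zero]), ⟨c₁₁, hy.symm⟩, ?_⟩
    exact ⟨c₀₀ + s, by rw [← add_assoc, add_comm c₀₁ c₀₀, ← hw, hws]⟩
  · apply hxz
    refine ⟨c₀₀, h0, ⟨c₁₀, hx.symm⟩, ?_⟩
    exact ⟨c₀₁ + s, by rw [← add_assoc, ← hw, hws]⟩
end

section
/- Let M be a conical refinement monoid with orthogonality x ⊥ y meaning no nonzero z satisfies z ≤⁺ x and z ≤⁺ y. If x ⊥ y then for every positive integer n, nx ⊥ ny. -/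
lemma riesz {M : Type*} [AddCommMonoid M] (hRef : IsRefinementMonoid M)
    (z a b : M) (h : AlgLE z (a + b)) :
    ∃ za zb : M, z = za + zb ∧ AlgLE za a ∧ AlgLE zb b := by
  obtain ⟨w, hw⟩ := h
  obtain ⟨c₀₀, c₀₁, c₁₀, c₁₁, h1, _, h3, h4⟩ := hRef z w a b hw
  exact ⟨c₀₀, c₀₁, h1, ⟨c₁₀, h3.symm⟩, ⟨c₁₁, h4.symm⟩⟩

lemma algle_trans {M : Type*} [AddCommMonoid M] {a b c : M}
    (h1 : AlgLE a b) (h2 : AlgLE b c) : AlgLE a c := by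
  obtain ⟨u, hu⟩ := h1; obtain ⟨v, hv⟩ := h2
  exact ⟨u + v, by rw [← add_assoc, hu, hv]⟩

lemma orth_add {M : Type*} [AddCommMonoid M] (hCon : Conical M)
    (hRef : IsRefinementMonoid M) {a b c : M}
    (hac : Orth a c) (hbc : Orth b c) : Orth (a + b) c := by
  rintro ⟨z, hz, hzab, hzc⟩
  obtain ⟨za, zb, hzsum, hza, hzb⟩ := riesz hRef z a b hzab
  have hza0 : za = 0 := by
    by_contra h
    exact hac ⟨za, h, hza, algle_trans ⟨zb, hzsum.symm⟩ hzc⟩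
  have hzb0 : zb = 0 := by
    by_contra h
    exact hbc ⟨zb, h, hzb, algle_trans ⟨za, by rw [add_comm]; exact hzsum.symm⟩ hzc⟩
  exact hz (by rw [hzsum, hza0, hzb0, add_zero])

lemma orth_symm {M : Type*} [AddCommMonoid M] {a b : M} (h : Orth a b) : Orth b a := by
  rintro ⟨z, hz, h1, h2⟩; exact h ⟨z, hz, h2, h1⟩

lemma orth_nsmul_right {M : Type*} [AddCommMonoid M] (hCon : Conical M)
    (hRef : IsRefinementMonoid M) {a b : M} (h : Orth a b) (n : ℕ) (hn : 0 < n) :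
    Orth a (n • b) := by
  induction n with
  | zero => omega
  | succ k ih =>
    rcases Nat.eq_zero_or_pos k with hk | hk
    · subst hk; simpa using h
    · have := orth_add hCon hRef (orth_symm (ih hk)) (orth_symm h)
      rw [succ_nsmul]
      exact orth_symm this

theorem stmt3 {M : Type*} [AddCommMonoid M]
    (hCon : Conical M) (hRef : IsRefinementMonoid M)
    (x y : M) (hxy : Orth x y) (n : ℕ) (hn : 0 < n) :
    Orth (n • x) (n • y) :=
  orth_nsmul_right hCon hRef
    (orth_symm (orth_nsmul_right hCon hRef (orth_symm hxy) n hn)) n hn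
end

section
/- Let M be a nonzero conical refinement monoid such that M \ {0} is downward directed (with respect to the algebraic preorder ≤⁺) and every element of M has finite index. Then M is isomorphic, as a commutative monoid, to ℕ (the natural numbers under addition). -/
section Aux
variable {M : Type*} [AddCommMonoid M]

lemma algLE_refl (x : M) : AlgLE x x := ⟨0, add_zero x⟩

lemma algLE_trans {x y z : M} (h1 : AlgLE x y) (h2 : AlgLE y z) : AlgLE x z := by
  obtain ⟨a, ha⟩ := h1; obtain ⟨b, hb⟩ := h2
  exact ⟨a + b, by rw [← add_assoc, ha, hb]⟩

lemma algLE_add {x y : M} (c : M) (h : AlgLE x y) : AlgLE (c + x) (c + y) := by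
  obtain ⟨a, ha⟩ := h; exact ⟨a, by rw [add_assoc, ha]⟩

lemma algLE_add_right {x y : M} (c : M) (h : AlgLE x y) : AlgLE (x + c) (y + c) := by
  rw [add_comm x c, add_comm y c]; exact algLE_add c h

lemma algLE_smul {x y : M} (k : ℕ) (h : AlgLE x y) : AlgLE (k • x) (k • y) := by
  obtain ⟨a, ha⟩ := h
  exact ⟨k • a, by rw [← smul_add, ha]⟩

lemma mon_cancel (hIdx : ∀ e : M, HasFiniteIndex e) {x y : M} (h : x + y = x) : y = 0 := by
  obtain ⟨n, hn⟩ := hIdx x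
  apply hn
  have key : ∀ k : ℕ, k • y + x = x := by
    intro k
    induction k with
    | zero => simp
    | succ k ih => rw [succ_nsmul, add_assoc, add_comm y x, h, ih]
  exact ⟨x, key (n + 1)⟩

lemma exists_monAtom (hnz : ∃ x : M, x ≠ 0) (hPrime : PrimeMonoid M)
    (hIdx : ∀ e : M, HasFiniteIndex e) : ∃ p : M, MonAtom p := by
  by_contra hNo
  push_neg at hNo
  obtain ⟨x₀, hx₀⟩ := hnz
  have descent : ∀ x : M, x ≠ 0 → ∃ y d : M, y ≠ 0 ∧ d ≠ 0 ∧ y + d = x := by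
    intro x hx
    have h := hNo x
    rw [MonAtom] at h
    push_neg at h
    obtain ⟨y, hy, hyx, hnxy⟩ := h hx
    obtain ⟨d, hd⟩ := hyx
    refine ⟨y, d, hy, ?_, hd⟩
    rintro rfl
    rw [add_zero] at hd
    exact hnxy (hd ▸ algLE_refl x)
  have P : ∀ k : ℕ, ∃ x z : M, x ≠ 0 ∧ z ≠ 0 ∧ AlgLE (k • z + x) x₀ := by
    intro k
    induction k with
    | zero => exact ⟨x₀, x₀, hx₀, hx₀, by simpa using algLE_refl x₀⟩
    | succ k ih =>
      obtain ⟨x, z, hx, hz, hle⟩ := ih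
      obtain ⟨y, d, hy, hd, hyd⟩ := descent x hx
      obtain ⟨w, hw, hwz, hwd⟩ := hPrime z d hz hd
      refine ⟨y, w, hy, hw, ?_⟩
      refine algLE_trans ?_ hle
      have e1 : (k + 1) • w + y = k • w + (y + w) := by
        rw [succ_nsmul, add_assoc, add_comm w y]
      rw [e1]
      have h2 : AlgLE (y + w) x := hyd ▸ algLE_add y hwd
      exact algLE_trans (algLE_add (k • w) h2) (algLE_add_right x (algLE_smul k hwz))
  obtain ⟨n, hn⟩ := hIdx x₀
  obtain ⟨x, z, hx, hz, hle⟩ := P (n + 1)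
  obtain ⟨a, ha⟩ := hle
  exact hz (hn z ⟨x + a, by rw [← add_assoc, ha]⟩)

lemma atom_le (hPrime : PrimeMonoid M) {p : M} (hp : MonAtom p)
    {x : M} (hx : x ≠ 0) : AlgLE p x := by
  obtain ⟨z, hz, hzx, hzp⟩ := hPrime x p hx hp.1
  exact algLE_trans (hp.2 z hz hzp) hzx

lemma rep_exists (hPrime : PrimeMonoid M) (hIdx : ∀ e : M, HasFiniteIndex e)
    {p : M} (hp : MonAtom p) (x : M) : ∃ k : ℕ, x = k • p := by
  obtain ⟨n, hn⟩ := hIdx x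
  have P : ∀ k : ℕ, (∃ j : ℕ, x = j • p) ∨ (∃ r : M, r ≠ 0 ∧ k • p + r = x) := by
    intro k
    induction k with
    | zero =>
      by_cases hx : x = 0
      · exact Or.inl ⟨0, by simp [hx]⟩
      · exact Or.inr ⟨x, hx, by simp⟩
    | succ k ih =>
      rcases ih with h | ⟨r, hr, hrx⟩
      · exact Or.inl h
      · obtain ⟨r', hr'⟩ := atom_le hPrime hp hr
        by_cases h0 : r' = 0
        · refine Or.inl ⟨k + 1, ?_⟩
          rw [← hrx, ← hr', h0, add_zero, succ_nsmul]
        · refine Or.inr ⟨r', h0, ?_⟩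
          rw [succ_nsmul, add_assoc, hr', hrx]
  rcases P (n + 1) with h | ⟨r, hr, hrx⟩
  · exact h
  · exact absurd (hn p ⟨r, hrx⟩) hp.1

lemma rep_unique (hCon : Conical M) (hIdx : ∀ e : M, HasFiniteIndex e)
    {p : M} (hp : p ≠ 0) : Function.Injective (fun k : ℕ => k • p) := by
  have key : ∀ j k : ℕ, j ≤ k → j • p = k • p → j = k := by
    intro j k hjk h
    by_contra hne
    obtain ⟨m, rfl⟩ := Nat.exists_eq_add_of_le hjk
    have hm : m ≠ 0 := by omega
    have : j • p + m • p = j • p := by rw [← add_nsmul, ← h]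
    have hmp : m • p = 0 := mon_cancel hIdx this
    obtain ⟨m', rfl⟩ := Nat.exists_eq_succ_of_ne_zero hm
    rw [succ_nsmul, add_comm] at hmp
    exact hp (hCon _ _ hmp).1
  intro j k h
  rcases le_total j k with hle | hle
  · exact key j k hle h
  · exact (key k j hle h.symm).symm

end Aux

theorem stmt4 {M : Type*} [AddCommMonoid M]
    (hnz : ∃ x : M, x ≠ 0)
    (hCon : Conical M) (hRef : IsRefinementMonoid M)
    (hPrime : PrimeMonoid M)
    (hIdx : ∀ e : M, HasFiniteIndex e) :
    Nonempty (M ≃+ ℕ) := by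
  obtain ⟨p, hp⟩ := exists_monAtom hnz hPrime hIdx
  have hbij : Function.Bijective (multiplesHom M p) := by
    constructor
    · intro j k h
      exact rep_unique hCon hIdx hp.1 (by simpa [multiplesHom_apply] using h)
    · intro x
      obtain ⟨k, hk⟩ := rep_exists hPrime hIdx hp x
      exact ⟨k, by simp [multiplesHom_apply, hk]⟩
  exact ⟨(AddEquiv.ofBijective (multiplesHom M p) hbij).symm⟩
end

section
/- Let M be a nonzero conical refinement monoid that is prime (M \ {0} downward directed under ≤⁺) and in which every element has finite index. Then every nonzero element of M is ≥⁺ some atom of M, and M has a unique atom. -/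
/-!
Finite index makes `≤⁺` antisymmetric: if `x + c = x` then every multiple of `c` lies below `x`,
so `c = 0`. A nonzero non-atom `z` splits as `z = x + y` with `x, y` nonzero, and a common nonzero
lower bound `w` of `x` and `y` (primeness) gives `2w ≤⁺ z`. Without an atom below `a` this halving
can be iterated, giving nonzero `w` with `2ⁿw ≤⁺ a` for every `n`, against the finite index of `a`.
Finally two atoms have a common nonzero lower bound, which by antisymmetry equals both.
-/

namespace AlgLE

variable {M : Type*} [AddCommMonoid M] {x y z : M}

theorem refl (x : M) : AlgLE x x := ⟨0, add_zero x⟩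

theorem trans (hxy : AlgLE x y) (hyz : AlgLE y z) : AlgLE x z := by
  obtain ⟨c, rfl⟩ := hxy
  obtain ⟨d, rfl⟩ := hyz
  exact ⟨c + d, (add_assoc x c d).symm⟩

theorem nsmul (m : ℕ) (h : AlgLE x y) : AlgLE (m • x) (m • y) := by
  obtain ⟨c, rfl⟩ := h
  exact ⟨m • c, (smul_add m x c).symm⟩

theorem nsmul_of_le {m n : ℕ} (h : m ≤ n) (x : M) : AlgLE (m • x) (n • x) :=
  ⟨(n - m) • x, by rw [← add_nsmul, Nat.add_sub_cancel' h]⟩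

theorem eq_zero_of_add_eq_self {c : M} (hx : HasFiniteIndex x) (h : x + c = x) : c = 0 := by
  obtain ⟨n, hn⟩ := hx
  have hfix : ∀ k : ℕ, x + k • c = x := by
    intro k
    induction k with
    | zero => simp
    | succ k ih => rw [succ_nsmul, ← add_assoc, ih, h]
  exact hn c ⟨x, by rw [add_comm, hfix]⟩

theorem antisymm (hCon : Conical M) (hx : HasFiniteIndex x) (hxy : AlgLE x y)
    (hyx : AlgLE y x) : x = y := by
  obtain ⟨a, rfl⟩ := hxy
  obtain ⟨b, hb⟩ := hyx
  have hab : a + b = 0 := eq_zero_of_add_eq_self hx (by rw [← add_assoc, hb])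
  rw [(hCon a b hab).1, add_zero]

end AlgLE

section PrimeMonoid

variable {M : Type*} [AddCommMonoid M]

theorem exists_two_nsmul_le_of_not_monAtom (hPrime : PrimeMonoid M) {z : M} (hz : z ≠ 0)
    (hnot : ¬ MonAtom z) : ∃ w : M, w ≠ 0 ∧ AlgLE (2 • w) z := by
  simp only [MonAtom, not_and, not_forall, exists_prop] at hnot
  obtain ⟨x, hx, ⟨y, rfl⟩, hzx⟩ := hnot hz
  have hy : y ≠ 0 := by
    rintro rfl
    exact hzx ⟨0, by rw [add_zero, add_zero]⟩
  obtain ⟨w, hw, ⟨c, hcx⟩, ⟨d, hdy⟩⟩ := hPrime x y hx hy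
  exact ⟨w, hw, c + d, by rw [two_nsmul, add_add_add_comm, hcx, hdy]⟩

theorem exists_monAtom_algLE (hPrime : PrimeMonoid M) {a : M} (ha : a ≠ 0)
    (hIdx : HasFiniteIndex a) : ∃ p : M, MonAtom p ∧ AlgLE p a := by
  by_contra! hno
  have halve : ∀ k : ℕ, ∃ z : M, z ≠ 0 ∧ AlgLE ((2 ^ k) • z) a := by
    intro k
    induction k with
    | zero => exact ⟨a, ha, by simpa using AlgLE.refl a⟩
    | succ k ih =>
      obtain ⟨z, hz, hza⟩ := ih
      have hz_le_a : AlgLE z a := by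
        simpa using (AlgLE.nsmul_of_le Nat.one_le_two_pow z).trans hza
      obtain ⟨w, hw, hwz⟩ :=
        exists_two_nsmul_le_of_not_monAtom hPrime hz (fun hzAtom => hno z hzAtom hz_le_a)
      refine ⟨w, hw, ?_⟩
      rw [pow_succ, mul_nsmul']
      exact (hwz.nsmul _).trans hza
  obtain ⟨n, hn⟩ := hIdx
  obtain ⟨z, hz, hza⟩ := halve n
  exact hz (hn z ((AlgLE.nsmul_of_le Nat.lt_two_pow_self z).trans hza))

theorem MonAtom.eq_of_algLE (hCon : Conical M) {p z : M} (hp : MonAtom p)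
    (hIdx : HasFiniteIndex p) (hz : z ≠ 0) (hzp : AlgLE z p) : p = z :=
  AlgLE.antisymm hCon hIdx (hp.2 z hz hzp) hzp

theorem MonAtom.eq (hCon : Conical M) (hPrime : PrimeMonoid M) (hIdx : ∀ e : M, HasFiniteIndex e)
    {p q : M} (hp : MonAtom p) (hq : MonAtom q) : p = q := by
  obtain ⟨z, hz, hzp, hzq⟩ := hPrime p q hp.1 hq.1
  rw [hp.eq_of_algLE hCon (hIdx p) hz hzp, hq.eq_of_algLE hCon (hIdx q) hz hzq]

end PrimeMonoid

theorem stmt5_general {M : Type*} [AddCommMonoid M]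
    (hnz : ∃ x : M, x ≠ 0)
    (hCon : Conical M)
    (hPrime : PrimeMonoid M)
    (hIdx : ∀ e : M, HasFiniteIndex e) :
    (∀ a : M, a ≠ 0 → ∃ p : M, MonAtom p ∧ AlgLE p a) ∧
    (∃! p : M, MonAtom p) := by
  have hAtomBelow : ∀ a : M, a ≠ 0 → ∃ p : M, MonAtom p ∧ AlgLE p a :=
    fun a ha => exists_monAtom_algLE hPrime ha (hIdx a)
  obtain ⟨x, hx⟩ := hnz
  obtain ⟨p, hp, -⟩ := hAtomBelow x hx
  exact ⟨hAtomBelow, p, hp, fun q hq => MonAtom.eq hCon hPrime hIdx hq hp⟩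

theorem stmt5 {M : Type*} [AddCommMonoid M]
    (hnz : ∃ x : M, x ≠ 0)
    (hCon : Conical M) (hRef : IsRefinementMonoid M)
    (hPrime : PrimeMonoid M)
    (hIdx : ∀ e : M, HasFiniteIndex e) :
    (∀ a : M, a ≠ 0 → ∃ p : M, MonAtom p ∧ AlgLE p a) ∧
    (∃! p : M, MonAtom p) :=
  stmt5_general hnz hCon hPrime hIdx
end

section
/- Let S be an inverse semigroup, let n be a positive integer, and let x ∈ S. Then d(xⁿ) = r(xⁿ) if and only if d(xⁿ) = d(xⁿ⁺¹) and r(xⁿ) = r(xⁿ⁺¹), where d(y) = y⁻¹y and r(y) = yy⁻¹. -/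
/-- An inverse semigroup: every element has a unique generalized inverse. -/
class InverseSemigroup (S : Type*) extends Semigroup S, Inv S where
  mul_inv_mul : ∀ x : S, x * x⁻¹ * x = x
  inv_mul_inv : ∀ x : S, x⁻¹ * x * x⁻¹ = x⁻¹
  inv_unique : ∀ x y : S, x * y * x = x → y * x * y = y → y = x⁻¹

/-- `spow x n = x^(n+1)`: positive powers in a semigroup. -/
def spow {S : Type*} [Semigroup S] (x : S) : ℕ → S
  | 0 => x
  | k + 1 => spow x k * x

/-- `d y = y⁻¹ * y`. -/
def dd {S : Type*} [Semigroup S] [Inv S] (y : S) : S := y⁻¹ * y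

/-- `r y = y * y⁻¹`. -/
def rr {S : Type*} [Semigroup S] [Inv S] (y : S) : S := y * y⁻¹

section ISaux
variable {S : Type*} [InverseSemigroup S]

open InverseSemigroup

lemma is_mim (x : S) : x * x⁻¹ * x = x := mul_inv_mul x
lemma is_imi (x : S) : x⁻¹ * x * x⁻¹ = x⁻¹ := inv_mul_inv x

lemma is_mim' (x : S) : x * (x⁻¹ * x) = x := by rw [← mul_assoc]; exact is_mim x
lemma is_imi' (x : S) : x⁻¹ * (x * x⁻¹) = x⁻¹ := by rw [← mul_assoc]; exact is_imi x

lemma is_mim'' (x t : S) : x * (x⁻¹ * (x * t)) = x * t := by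
  rw [← mul_assoc, ← mul_assoc, is_mim]
lemma is_imi'' (x t : S) : x⁻¹ * (x * (x⁻¹ * t)) = x⁻¹ * t := by
  rw [← mul_assoc, ← mul_assoc, is_imi]

lemma is_inv_inv (x : S) : x⁻¹⁻¹ = x := (inv_unique x⁻¹ x (is_imi x) (is_mim x)).symm

lemma inv_of_idem {e : S} (he : e * e = e) : e⁻¹ = e :=
  (inv_unique e e (by rw [he, he]) (by rw [he, he])).symm

lemma dd_idem (x : S) : dd x * dd x = dd x := by
  simp only [dd, mul_assoc, is_mim'', is_mim']
lemma rr_idem (x : S) : rr x * rr x = rr x := by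
  simp only [rr, mul_assoc, is_imi'', is_imi', is_mim'', is_mim']

lemma idem_mul {e f : S} (he : e * e = e) (hf : f * f = f) :
    (e * f) * (e * f) = e * f := by
  set z := (e * f)⁻¹ with hz
  have he' : ∀ t : S, e * (e * t) = e * t := fun t => by rw [← mul_assoc, he]
  have hf' : ∀ t : S, f * (f * t) = f * t := fun t => by rw [← mul_assoc, hf]
  have h1 : e * (f * (z * (e * f))) = e * f := by
    have := is_mim (e * f); simpa only [mul_assoc] using this
  have h2t : ∀ t : S, z * (e * (f * (z * t))) = z * t := by
    intro t
    have h0 := congrArg (· * t) (is_imi (e * f))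
    simpa only [mul_assoc] using h0
  have key : f * z * e = z := by
    have A : (e * f) * (f * z * e) * (e * f) = e * f := by
      simp only [mul_assoc, hf', he']
      exact h1
    have B : (f * z * e) * (e * f) * (f * z * e) = f * z * e := by
      simp only [mul_assoc, hf', he', h2t]
    exact inv_unique (e * f) (f * z * e) A B
  have zz : z * z = z := by
    rw [← key]
    simp only [mul_assoc, h2t]
  have hzi : e * f = z⁻¹ := by rw [hz, is_inv_inv]
  rw [hzi, inv_of_idem zz]; exact zz

lemma idem_comm {e f : S} (he : e * e = e) (hf : f * f = f) :
    e * f = f * e := by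
  have hef := idem_mul he hf
  have hfe := idem_mul hf he
  have he' : ∀ t : S, e * (e * t) = e * t := fun t => by rw [← mul_assoc, he]
  have hf' : ∀ t : S, f * (f * t) = f * t := fun t => by rw [← mul_assoc, hf]
  have A : (e * f) * (f * e) * (e * f) = e * f := by
    simp only [mul_assoc, he', hf']
    simpa only [mul_assoc] using hef
  have B : (f * e) * (e * f) * (f * e) = f * e := by
    simp only [mul_assoc, he', hf']
    simpa only [mul_assoc] using hfe
  have : f * e = (e * f)⁻¹ := inv_unique (e * f) (f * e) A B
  rw [this, inv_of_idem hef]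

lemma is_mul_inv_rev (x y : S) : (x * y)⁻¹ = y⁻¹ * x⁻¹ := by
  have hc : (x⁻¹ * x) * (y * y⁻¹) = (y * y⁻¹) * (x⁻¹ * x) :=
    idem_comm (dd_idem x) (rr_idem y)
  have A : (x * y) * (y⁻¹ * x⁻¹) * (x * y) = x * y := by
    calc (x * y) * (y⁻¹ * x⁻¹) * (x * y)
        = x * ((y * y⁻¹) * (x⁻¹ * x)) * y := by simp only [mul_assoc]
      _ = x * ((x⁻¹ * x) * (y * y⁻¹)) * y := by rw [hc]
      _ = (x * (x⁻¹ * x)) * ((y * y⁻¹) * y) := by simp only [mul_assoc]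
      _ = x * y := by rw [is_mim', is_mim]
  have B : (y⁻¹ * x⁻¹) * (x * y) * (y⁻¹ * x⁻¹) = y⁻¹ * x⁻¹ := by
    calc (y⁻¹ * x⁻¹) * (x * y) * (y⁻¹ * x⁻¹)
        = y⁻¹ * ((x⁻¹ * x) * (y * y⁻¹)) * x⁻¹ := by simp only [mul_assoc]
      _ = y⁻¹ * ((y * y⁻¹) * (x⁻¹ * x)) * x⁻¹ := by rw [← hc]
      _ = (y⁻¹ * (y * y⁻¹)) * ((x⁻¹ * x) * x⁻¹) := by simp only [mul_assoc]
      _ = y⁻¹ * x⁻¹ := by rw [is_imi', is_imi]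
  exact (inv_unique (x * y) (y⁻¹ * x⁻¹) A B).symm

lemma dd_mul (u v : S) : dd (u * v) = v⁻¹ * (dd u * v) := by
  simp only [dd, is_mul_inv_rev, mul_assoc]

lemma rr_mul (u v : S) : rr (u * v) = u * (rr v * u⁻¹) := by
  simp only [rr, is_mul_inv_rev, mul_assoc]

lemma dd_mul_le (u v : S) : dd (u * v) * dd v = dd (u * v) := by
  simp only [dd, is_mul_inv_rev, mul_assoc, is_mim'', is_mim']

lemma rr_mul_le (u v : S) : rr (u * v) * rr u = rr (u * v) := by
  simp only [rr, is_mul_inv_rev, mul_assoc, is_imi'', is_imi']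

end ISaux

section Spow
variable {S : Type*} [Semigroup S]

lemma spow_add (x : S) (i j : ℕ) : spow x i * spow x j = spow x (i + j + 1) := by
  induction j with
  | zero => rfl
  | succ k ih =>
      show spow x i * (spow x k * x) = _
      rw [← mul_assoc, ih]; rfl

lemma spow_succ' (x : S) (k : ℕ) : spow x (k + 1) = x * spow x k := by
  have := spow_add x 0 k
  simpa [spow, Nat.add_comm] using this.symm

lemma spow_spow (x : S) (i j : ℕ) :
    spow (spow x i) j = spow x (i * j + i + j) := by
  induction j with
  | zero => simp [spow]
  | succ k ih =>
      show spow (spow x i) k * spow x i = _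
      rw [ih, spow_add]
      congr 1
      ring

end Spow

section Main
variable {S : Type*} [InverseSemigroup S]

lemma dd_spow_le (y : S) (k : ℕ) : dd (spow y k) * dd y = dd (spow y k) := by
  cases k with
  | zero => exact dd_idem y
  | succ n => exact dd_mul_le (spow y n) y

lemma rr_spow_le (y : S) (k : ℕ) : rr (spow y k) * rr y = rr (spow y k) := by
  cases k with
  | zero => exact rr_idem y
  | succ n => rw [spow_succ']; exact rr_mul_le y (spow y n)

end Main

/-- For every positive power `xⁿ = spow x (n-1)` (here `n` ranges over all
positive integers, written as `m + 1`): `d(xⁿ) = r(xⁿ)` iff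
`d(xⁿ) = d(xⁿ⁺¹)` and `r(xⁿ) = r(xⁿ⁺¹)`. -/
theorem stmt6 {S : Type*} [InverseSemigroup S] (x : S) (m : ℕ) :
    dd (spow x m) = rr (spow x m) ↔
      (dd (spow x m) = dd (spow x (m + 1)) ∧
       rr (spow x m) = rr (spow x (m + 1))) := by
  set a := spow x m with ha
  constructor
  · intro h
    -- powers of a keep the same d and r
    have pow_dr : ∀ k, dd (spow a k) = dd a ∧ rr (spow a k) = rr a := by
      intro k
      induction k with
      | zero => exact ⟨rfl, rfl⟩
      | succ n ih =>
          constructor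
          · show dd (spow a n * a) = dd a
            rw [dd_mul, ih.1, h]
            show a⁻¹ * (a * a⁻¹ * a) = rr a
            rw [is_mim]
            exact h
          · rw [spow_succ', rr_mul, ih.2, ← h]
            show a * (a⁻¹ * a * a⁻¹) = dd a
            rw [is_imi]
            exact h.symm
    -- the key power identity : (x^(m+1))^(m+1) = a^(m+2)
    have hpow : spow (spow x (m+1)) m = spow a (m + 1) := by
      rw [ha, spow_spow, spow_spow]
      congr 1
      ring
    have hdc1 : dd (spow x (m+1)) * dd a = dd (spow x (m+1)) := by
      rw [spow_succ']
      exact dd_mul_le x (spow x m)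
    have hdc2 : dd a * dd (spow x (m+1)) = dd a := by
      have h' := dd_spow_le (spow x (m+1)) m
      rw [hpow, (pow_dr (m+1)).1] at h'
      exact h'
    have hrc1 : rr (spow x (m+1)) * rr a = rr (spow x (m+1)) := by
      exact rr_mul_le a x
    have hrc2 : rr a * rr (spow x (m+1)) = rr a := by
      have h' := rr_spow_le (spow x (m+1)) m
      rw [hpow, (pow_dr (m+1)).2] at h'
      exact h'
    constructor
    · calc dd a = dd a * dd (spow x (m+1)) := hdc2.symm
        _ = dd (spow x (m+1)) * dd a := idem_comm (dd_idem a) (dd_idem _)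
        _ = dd (spow x (m+1)) := hdc1
    · calc rr a = rr a * rr (spow x (m+1)) := hrc2.symm
        _ = rr (spow x (m+1)) * rr a := idem_comm (rr_idem a) (rr_idem _)
        _ = rr (spow x (m+1)) := hrc1
  · rintro ⟨h1, h2⟩
    -- stability for all further powers
    have stab : ∀ k, dd (spow x (m + k)) = dd a ∧ rr (spow x (m + k)) = rr a := by
      intro k
      induction k with
      | zero => exact ⟨rfl, rfl⟩
      | succ n ih =>
          constructor
          · show dd (spow x (m + n) * x) = dd a
            rw [dd_mul, ih.1, ← dd_mul]
            exact h1.symm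
          · have hs : spow x (m + n + 1) = x * spow x (m + n) := spow_succ' x (m+n)
            show rr (spow x (m + n + 1)) = rr a
            rw [hs, rr_mul, ih.2, ← rr_mul]
            show rr (x * spow x m) = rr a
            rw [← spow_succ' x m]
            exact h2.symm
    have hd2 : dd (a * a) = dd a := by
      have h' := (stab (m+1)).1
      rw [show m + (m + 1) = m + m + 1 from by omega, ← spow_add] at h'
      exact h'
    have hr2 : rr (a * a) = rr a := by
      have h' := (stab (m+1)).2
      rw [show m + (m + 1) = m + m + 1 from by omega, ← spow_add] at h'
      exact h'
    have comm : dd a * rr a = rr a * dd a := idem_comm (dd_idem a) (rr_idem a)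
    have hfe : rr a * (dd a * a) = a := by
      have step : a * dd (a * a) = a * dd a := by rw [hd2]
      have lhs : a * dd (a * a) = rr a * (dd a * a) := by
        simp only [dd, rr, is_mul_inv_rev, mul_assoc]
      have rhs : a * dd a = a := is_mim' a
      rw [← lhs, step, rhs]
    have hef : dd a * (rr a * a⁻¹) = a⁻¹ := by
      have step : a⁻¹ * rr (a * a) = a⁻¹ * rr a := by rw [hr2]
      have lhs : a⁻¹ * rr (a * a) = dd a * (rr a * a⁻¹) := by
        simp only [dd, rr, is_mul_inv_rev, mul_assoc]
      have rhs : a⁻¹ * rr a = a⁻¹ := is_imi' a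
      rw [← lhs, step, rhs]
    have heef : dd a = dd a * rr a := by
      calc dd a = a⁻¹ * a := rfl
        _ = (dd a * (rr a * a⁻¹)) * a := by rw [hef]
        _ = dd a * (rr a * (a⁻¹ * a)) := by simp only [mul_assoc]
        _ = dd a * (rr a * dd a) := rfl
        _ = dd a * (dd a * rr a) := by rw [← comm]
        _ = (dd a * dd a) * rr a := by rw [mul_assoc]
        _ = dd a * rr a := by rw [dd_idem]
    have hfef : rr a = dd a * rr a := by
      calc rr a = a * a⁻¹ := rfl
        _ = (rr a * (dd a * a)) * a⁻¹ := by rw [hfe]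
        _ = rr a * (dd a * (a * a⁻¹)) := by simp only [mul_assoc]
        _ = rr a * (dd a * rr a) := rfl
        _ = rr a * (rr a * dd a) := by rw [comm]
        _ = (rr a * rr a) * dd a := by rw [mul_assoc]
        _ = rr a * dd a := by rw [rr_idem]
        _ = dd a * rr a := comm.symm
    rw [heef, ← hfef]
end

section
/- Let n and k be positive integers and let M be the monoid of n×n matrices over a group with zero G⁰ whose nonzero entries form a partial permutation pattern (generalized rook matrices). Then M satisfies d(x^k) = r(x^k) for all x (where d(x)=x⁻¹x, r(x)=xx⁻¹) if and only if k ≥ n. -/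
/-- A generalized rook matrix of order `n` over the group with zero `G⁰`:
an `n × n` matrix over `G ∪ {0}` with at most one nonzero entry in each row
and each column.  We record, for each column `j`, the (optional) pair
`(entry, row)` of its unique nonzero entry; the field `inj` states that
distinct columns use distinct rows. -/
structure Rook (n : ℕ) (G : Type*) [Group G] : Type _ where
  col : Fin n → Option (G × Fin n)
  inj : ∀ ⦃j k : Fin n⦄ ⦃p q : G × Fin n⦄,
      col j = some p → col k = some q → p.2 = q.2 → j = k

namespace Rook

variable {n : ℕ} {G : Type*} [Group G]

theorem ext' {x y : Rook n G} (h : x.col = y.col) : x = y := by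
  cases x; cases y; cases h; rfl

/-- Matrix multiplication of generalized rook matrices. -/
instance : Mul (Rook n G) where
  mul x y :=
  { col := fun j => (y.col j).bind fun p => (x.col p.2).map fun q => (q.1 * p.1, q.2)
    inj := by
      intro j k p q hp hq hpq
      simp only [Option.bind_eq_some_iff, Option.map_eq_some_iff] at hp hq
      obtain ⟨pj, hyj, qj, hxj, rfl⟩ := hp
      obtain ⟨pk, hyk, qk, hxk, rfl⟩ := hq
      exact y.inj hyj hyk (x.inj hxj hxk hpq) }

theorem mul_col (x y : Rook n G) (j : Fin n) :
    (x * y).col j = (y.col j).bind fun p => (x.col p.2).map fun q => (q.1 * p.1, q.2) :=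
  rfl

/-- The identity matrix. -/
instance : One (Rook n G) where
  one :=
  { col := fun j => some (1, j)
    inj := by
      intro j k p q hp hq hpq
      simp only [Option.some.injEq] at hp hq
      subst hp; subst hq; exact hpq }

theorem one_col (j : Fin n) : (1 : Rook n G).col j = some (1, j) := rfl

/-- The zero matrix. -/
instance : Zero (Rook n G) where
  zero :=
  { col := fun _ => none
    inj := fun _ _ _ _ hp _ _ => nomatch hp }

instance : Monoid (Rook n G) where
  mul_assoc x y z := by
    refine ext' (funext fun j => ?_)
    simp only [mul_col]
    rcases hz : z.col j with _ | p
    · simp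
    rcases hy : y.col p.2 with _ | p'
    · simp [hy]
    rcases hx : x.col p'.2 with _ | p''
    · simp [hy, hx]
    simp [hy, hx, mul_assoc]
  one_mul x := by
    refine ext' (funext fun j => ?_)
    simp only [mul_col]
    rcases hx : x.col j with _ | p <;> simp [one_col]
  mul_one x := by
    refine ext' (funext fun j => ?_)
    simp only [mul_col, one_col]
    rcases hx : x.col j with _ | p <;> simp [hx]

open scoped Classical in
/-- The inverse of a generalized rook matrix (conjugate transpose pattern). -/
noncomputable instance : Inv (Rook n G) where
  inv x :=
  { col := fun i =>
      if h : ∃ jp : Fin n × (G × Fin n), x.col jp.1 = some jp.2 ∧ jp.2.2 = i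
      then some ((h.choose.2.1)⁻¹, h.choose.1)
      else none
    inj := by
      intro i i' p q hp hq hpq
      try simp only [] at hp hq
      split_ifs at hp hq with h h'
      obtain ⟨hcol, hrow⟩ := h.choose_spec
      obtain ⟨hcol', hrow'⟩ := h'.choose_spec
      injection hp with hp'
      injection hq with hq'
      subst hp'; subst hq'
      have hj : h.choose.1 = h'.choose.1 := hpq
      rw [← hj, hcol] at hcol'
      have hpq2 : h.choose.2 = h'.choose.2 := Option.some.inj hcol'
      rw [← hrow, ← hrow', hpq2] }

end Rook

/-!
Only the zero pattern matters: `x⁻¹ * x` and `x * x⁻¹` are the diagonal idempotents on the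
columns, respectively rows, occupied by `x`, so the identity says that `x ^ k` has the same
domain and range as a partial injection of `Fin n`. Periodic points lie in the domain and in
the range of every power. Conversely, for `k ≥ n`, a point in the domain of `x ^ k` has an orbit
of length `n + 1`, hence is periodic by pigeonhole and injectivity; and a point `xᵏ u` of the
range is periodic because `u` is. For `k < n` the
shift `j ↦ j + 1` has `0` in the domain of its `k`-th power but not in its range.
-/

namespace Rook

variable {n : ℕ} {G : Type*} [Group G]

def row (x : Rook n G) (j : Fin n) : Option (Fin n) :=
  (x.col j).map Prod.snd

theorem row_mul (x y : Rook n G) (j : Fin n) : (x * y).row j = (y.row j).bind x.row := by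
  simp only [row, mul_col]
  rcases y.col j with _ | p
  · rfl
  · simp [row, Option.map_map, Function.comp_def]

theorem row_one (j : Fin n) : (1 : Rook n G).row j = some j := rfl

theorem eq_of_row_eq_some (x : Rook n G) {j j' i : Fin n} (h : x.row j = some i)
    (h' : x.row j' = some i) : j = j' := by
  simp only [row, Option.map_eq_some_iff] at h h'
  obtain ⟨p, hp, rfl⟩ := h
  obtain ⟨q, hq, hpq⟩ := h'
  exact x.inj hp hq hpq.symm

theorem inv_col_of_col_eq_some (x : Rook n G) {j i : Fin n} {g : G}
    (h : x.col j = some (g, i)) : x⁻¹.col i = some (g⁻¹, j) := by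
  have hex : ∃ jp : Fin n × (G × Fin n), x.col jp.1 = some jp.2 ∧ jp.2.2 = i :=
    ⟨(j, (g, i)), h, rfl⟩
  obtain ⟨hcol, hrow⟩ := hex.choose_spec
  have hj : hex.choose.1 = j := x.inj hcol h hrow
  rw [hj, h, Option.some_inj] at hcol
  classical
  change dite _ _ _ = _
  rw [dif_pos hex, hj, ← hcol]

theorem inv_col_eq_none (x : Rook n G) {i : Fin n} (h : ∀ j, x.row j ≠ some i) :
    x⁻¹.col i = none := by
  classical
  change dite _ _ _ = _
  rw [dif_neg]
  rintro ⟨⟨j, g, i'⟩, hcol, rfl⟩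
  exact h j (by simp [row, hcol])

theorem inv_mul_self_col (x : Rook n G) (j : Fin n) :
    (x⁻¹ * x).col j = if (x.row j).isSome then some (1, j) else none := by
  rw [mul_col]
  rcases h : x.col j with _ | ⟨g, i⟩
  · simp [row, h]
  · simp [row, h, inv_col_of_col_eq_some x h]

theorem mul_inv_self_col (x : Rook n G) (i : Fin n) :
    (x * x⁻¹).col i = if ∃ j, x.row j = some i then some (1, i) else none := by
  by_cases hran : ∃ j, x.row j = some i
  · rw [if_pos hran]
    obtain ⟨j, hj⟩ := hran
    obtain ⟨⟨g, i'⟩, hcol, rfl⟩ := Option.map_eq_some_iff.mp hj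
    simp [mul_col, inv_col_of_col_eq_some x hcol, hcol]
  · push Not at hran
    simp [mul_col, inv_col_eq_none x hran, hran]

theorem inv_mul_self_eq_mul_inv_self_iff (x : Rook n G) :
    x⁻¹ * x = x * x⁻¹ ↔ ∀ i, (x.row i).isSome ↔ ∃ j, x.row j = some i := by
  refine ⟨fun h i => ?_, fun h => ext' (funext fun i => ?_)⟩
  · have hi := congrFun (congrArg col h) i
    rw [inv_mul_self_col, mul_inv_self_col] at hi
    split_ifs at hi with h₁ h₂ h₂ <;> simp_all
  · rw [inv_mul_self_col, mul_inv_self_col, if_congr (h i) rfl rfl]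

theorem row_pow_add (x : Rook n G) (a b : ℕ) (j : Fin n) :
    (x ^ (a + b)).row j = ((x ^ b).row j).bind (x ^ a).row := by
  rw [pow_add, row_mul]

theorem isSome_row_pow_of_le (x : Rook n G) {a b : ℕ} (hab : a ≤ b) {j : Fin n}
    (h : ((x ^ b).row j).isSome) : ((x ^ a).row j).isSome := by
  obtain ⟨c, rfl⟩ := Nat.exists_eq_add_of_le hab
  rw [add_comm, row_pow_add] at h
  cases ha : (x ^ a).row j <;> simp_all

theorem row_pow_eq_self (x : Rook n G) {j : Fin n} (h : x.row j = some j) (q : ℕ) :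
    (x ^ q).row j = some j := by
  induction q with
  | zero => exact row_one j
  | succ q ih => rw [pow_succ, row_mul, h, Option.bind_some, ih]

theorem row_pow_sub_eq_self (x : Rook n G) {a b : ℕ} (hab : a < b) {j i : Fin n}
    (ha : (x ^ a).row j = some i) (hb : (x ^ b).row j = some i) :
    (x ^ (b - a)).row j = some j := by
  rw [← Nat.add_sub_cancel' hab.le, row_pow_add, Option.bind_eq_some_iff] at hb
  obtain ⟨u, hu, hui⟩ := hb
  rwa [eq_of_row_eq_some _ hui ha] at hu

/-- Pigeonhole on the orbit `j, x j, …, xⁿ j`. -/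
theorem exists_row_pow_eq_self (x : Rook n G) {j : Fin n} (h : ((x ^ n).row j).isSome) :
    ∃ m, 0 < m ∧ (x ^ m).row j = some j := by
  have hdom (a : Fin (n + 1)) : ((x ^ (a : ℕ)).row j).isSome :=
    isSome_row_pow_of_le x (Nat.lt_succ_iff.mp a.isLt) h
  obtain ⟨a, b, hne, heq⟩ := Fintype.exists_ne_map_eq_of_card_lt
    (fun a : Fin (n + 1) => ((x ^ (a : ℕ)).row j).get (hdom a)) (by simp)
  have hrow (c : Fin (n + 1)) : (x ^ (c : ℕ)).row j = some (((x ^ (c : ℕ)).row j).get (hdom c)) :=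
    (Option.some_get _).symm
  rcases Nat.lt_or_gt_of_ne (Fin.val_ne_of_ne hne) with hab | hba
  · exact ⟨b - a, Nat.sub_pos_of_lt hab,
      row_pow_sub_eq_self x hab (hrow a) (heq ▸ hrow b)⟩
  · exact ⟨a - b, Nat.sub_pos_of_lt hba,
      row_pow_sub_eq_self x hba (hrow b) (heq ▸ hrow a)⟩

section Periodic

variable {x : Rook n G} {m : ℕ} {j : Fin n}

theorem isSome_row_pow_of_periodic (hm : 0 < m) (hj : (x ^ m).row j = some j) (k : ℕ) :
    ((x ^ k).row j).isSome := by
  have hmk : (x ^ (m * k)).row j = some j := by rw [pow_mul, row_pow_eq_self _ hj]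
  exact isSome_row_pow_of_le x (Nat.le_mul_of_pos_left k hm) (by rw [hmk]; rfl)

theorem exists_row_pow_eq_of_periodic (hm : 0 < m) (hj : (x ^ m).row j = some j) (k : ℕ) :
    ∃ u, (x ^ k).row u = some j := by
  have hmk : (x ^ (k + (m * k - k))).row j = some j := by
    rw [Nat.add_sub_cancel' (Nat.le_mul_of_pos_left k hm), pow_mul, row_pow_eq_self _ hj]
  rw [row_pow_add, Option.bind_eq_some_iff] at hmk
  obtain ⟨u, -, hu⟩ := hmk
  exact ⟨u, hu⟩

end Periodic

theorem exists_row_pow_eq_self_of_row_pow_eq (x : Rook n G) {k : ℕ} (hk : n ≤ k)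
    {u j : Fin n} (hu : (x ^ k).row u = some j) : ∃ m, 0 < m ∧ (x ^ m).row j = some j := by
  obtain ⟨m, hm, hmu⟩ := exists_row_pow_eq_self x (isSome_row_pow_of_le x hk (by rw [hu]; rfl))
  refine ⟨m, hm, ?_⟩
  calc (x ^ m).row j = ((x ^ k).row u).bind (x ^ m).row := by rw [hu, Option.bind_some]
    _ = (x ^ (k + m)).row u := by rw [← row_pow_add, add_comm]
    _ = some j := by rw [row_pow_add, hmu, Option.bind_some, hu]

theorem isSome_row_pow_iff_exists_row_pow_eq (x : Rook n G) {k : ℕ} (hk : n ≤ k) (j : Fin n) :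
    ((x ^ k).row j).isSome ↔ ∃ u, (x ^ k).row u = some j := by
  constructor
  · intro h
    obtain ⟨m, hm, hj⟩ := exists_row_pow_eq_self x (isSome_row_pow_of_le x hk h)
    exact exists_row_pow_eq_of_periodic hm hj k
  · rintro ⟨u, hu⟩
    obtain ⟨m, hm, hj⟩ := exists_row_pow_eq_self_of_row_pow_eq x hk hu
    exact isSome_row_pow_of_periodic hm hj k

variable (n G) in
def shift : Rook n G where
  col j := if h : (j : ℕ) + 1 < n then some (1, ⟨j + 1, h⟩) else none
  inj := by
    intro j k p q hp hq hpq
    split_ifs at hp hq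
    cases hp; cases hq
    simpa [Fin.ext_iff] using hpq

theorem row_shift_eq_some_iff {j i : Fin n} : (shift n G).row j = some i ↔ (j : ℕ) + 1 = i := by
  simp only [row, shift]
  split_ifs with h
  · simp [Fin.ext_iff]
  · simp only [Option.map_none, reduceCtorEq, false_iff]
    omega

theorem row_shift_pow_eq_some_iff (m : ℕ) {j i : Fin n} :
    ((shift n G) ^ m).row j = some i ↔ (j : ℕ) + m = i := by
  induction m generalizing j with
  | zero => simp [row_one, Fin.ext_iff]
  | succ m ih =>
    rw [pow_succ, row_mul, Option.bind_eq_some_iff]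
    constructor
    · rintro ⟨u, hu, hui⟩
      rw [row_shift_eq_some_iff] at hu
      rw [ih] at hui
      omega
    · intro h
      exact ⟨⟨j + 1, by omega⟩, row_shift_eq_some_iff.mpr rfl, ih.mpr (by simp; omega)⟩

end Rook

theorem stmt12_general (n k : ℕ) (hk : 0 < k) (G : Type*) [Group G] :
    (∀ x : Rook n G, (x ^ k)⁻¹ * x ^ k = x ^ k * (x ^ k)⁻¹) ↔ n ≤ k := by
  simp only [Rook.inv_mul_self_eq_mul_inv_self_iff]
  refine ⟨fun h => ?_, fun hnk x => Rook.isSome_row_pow_iff_exists_row_pow_eq x hnk⟩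
  by_contra! hkn
  have hdom : ((Rook.shift n G ^ k).row ⟨0, by omega⟩).isSome := by
    rw [Option.isSome_iff_exists]
    exact ⟨⟨k, hkn⟩, Rook.row_shift_pow_eq_some_iff k |>.mpr (zero_add k)⟩
  obtain ⟨u, hu⟩ := (h _ _).mp hdom
  have hu0 : (u : ℕ) + k = 0 := Rook.row_shift_pow_eq_some_iff k |>.mp hu
  omega

/-- The monoid `Matₙ(G⁰)` of generalized rook matrices over a group with zero
satisfies Reilly's identity `d(x^k) = r(x^k)` (with `d x = x⁻¹ * x`,
`r x = x * x⁻¹`) if and only if `k ≥ n`. -/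
theorem stmt12 (n k : ℕ) (hn : 0 < n) (hk : 0 < k) (G : Type*) [Group G] :
    (∀ x : Rook n G, (x ^ k)⁻¹ * x ^ k = x ^ k * (x ^ k)⁻¹) ↔ n ≤ k :=
  stmt12_general n k hk G
end
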